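/- If m ≤ e and m+1 ≤ e+1, the system t_1 v(x_1) + ⋯ + t_s v(x_s) = (0,…,0,1)^T in F_q^{m+1}, where v(x) = (1, x, x^p, …, x^{p^{m−1}})^T, has no solution with s ≤ m and x_i ∈ F_q, t_i ∈ F_q. Consequently, two lines L, L' of L_m(q) with L' − L = [0,…,0,1] are at distance at least 2(m+1), and the diameter of L_m(q) is exactly 2(m+1). -/

import Mathlib

/-- In the linearized Wenger graph, point `P` is adjacent to line `L` iff
`l_k + p_k = p_1^{p^{k-2}} l_1` for `2 ≤ k ≤ m+1`. -/
def lwAdj (p : ℕ) {F : Type} [Field F] {m : ℕ} (P L : Fin (m + 1) → F) : Prop :=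
  ∀ k : Fin m, L k.succ + P k.succ = P 0 ^ p ^ (k : ℕ) * L 0

/-- The linearized Wenger graph `L_m(q)` as a bipartite graph on points ⊕ lines. -/
def lwGraph (p : ℕ) (F : Type) [Field F] (m : ℕ) :
    SimpleGraph ((Fin (m + 1) → F) ⊕ (Fin (m + 1) → F)) :=
  SimpleGraph.fromRel fun v w => match v, w with
    | Sum.inl P, Sum.inr L => lwAdj p P L
    | _, _ => False

/-!
Two lines through a common point `P` differ by a multiple of `v(P 0)`, so a walk of length `2s`
between lines `L, L'` exists exactly when `L' - L = ∑_{i<s} tᵢ v(xᵢ)`.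

If `∑_{i≤s} tᵢ v(xᵢ) = (0,…,0,1)` with `s ≤ m`, the first coordinate gives `∑ tᵢ = 0`, so, Frobenius
powers being additive, translating every `xᵢ` by `-xₛ` changes nothing and kills the last term.
The remaining `s - 1 < m` terms have moments `∑ tᵢ zᵢ^(p^r)` vanishing for `r < m - 1` but not for
`r = m - 1`. Writing the `zᵢ` in an `𝔽_p`-basis of their span, the invertibility of the Moore
matrix `(yⱼ^(p^r))` of an `𝔽_p`-independent family forces all moments to vanish.

Conversely, for `𝔽_p`-independent `z₁, …, z_m` (available as `m ≤ e`), the same argument shows that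
`v(x), v(x + z₁), …, v(x + z_m)` is a basis of `𝔽_q^(m+1)`; this yields walks of length at most
`2(m+1)` between any two vertices.
-/

open Polynomial FiniteField

section Linearized

variable {p : ℕ} [Fact p.Prime] {K : Type*} [Field K]

variable (p) in
noncomputable def linearizedPoly {k : ℕ} (a : Fin k → K) : K[X] :=
  ∑ r, C (a r) * X ^ p ^ (r : ℕ)

theorem coeff_linearizedPoly_pow {k : ℕ} (a : Fin k → K) (r : Fin k) :
    (linearizedPoly p a).coeff (p ^ (r : ℕ)) = a r := by
  have hinj : Function.Injective fun r : Fin k => p ^ (r : ℕ) :=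
    (Nat.pow_right_injective (Fact.out : p.Prime).two_le).comp Fin.val_injective
  simp [linearizedPoly, coeff_X_pow, hinj.eq_iff]

theorem degree_linearizedPoly_lt {k : ℕ} (a : Fin k → K) :
    (linearizedPoly p a).degree < ↑(p ^ k) := by
  rw [← mem_degreeLT]
  refine Submodule.sum_mem _ fun r _ => mem_degreeLT.mpr ?_
  refine (degree_C_mul_X_pow_le _ _).trans_lt ?_
  exact_mod_cast Nat.pow_lt_pow_right (Fact.out : p.Prime).one_lt r.isLt

variable [Algebra (ZMod p) K]

theorem frobeniusAlgHom_zmod_pow_apply (r : ℕ) (z : K) :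
    (frobeniusAlgHom (ZMod p) K ^ r) z = z ^ p ^ r := by
  rw [AlgHom.coe_pow, coe_frobeniusAlgHom, pow_iterate, ZMod.card]

theorem eval_linearizedPoly_sum_smul {k n : ℕ} (a : Fin k → K) (c : Fin n → ZMod p)
    (y : Fin n → K) :
    (linearizedPoly p a).eval (∑ j, c j • y j) = ∑ j, c j • (linearizedPoly p a).eval (y j) := by
  simp only [linearizedPoly, eval_finsetSum, eval_mul, eval_C, eval_pow, eval_X,
    ← frobeniusAlgHom_zmod_pow_apply, map_sum, map_smul, Finset.mul_sum, mul_smul_comm,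
    Finset.smul_sum]
  exact Finset.sum_comm

theorem eq_zero_of_eval_linearizedPoly_eq_zero {k : ℕ} {y : Fin k → K}
    (hy : LinearIndependent (ZMod p) y) {a : Fin k → K}
    (h : ∀ j, (linearizedPoly p a).eval (y j) = 0) : a = 0 := by
  classical
  by_contra ha
  have hf : linearizedPoly p a ≠ 0 := fun h0 => ha <| funext fun r => by
    rw [← coeff_linearizedPoly_pow (p := p) a r, h0, coeff_zero, Pi.zero_apply]
  -- The `p ^ k` points of the `𝔽_p`-span of `y` are roots, but the degree is less than `p ^ k`.
  set Z := Finset.univ.image (Fintype.linearCombination (ZMod p) y)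
  have hZ : Z.card = p ^ k := by
    rw [Finset.card_image_of_injective _
      (linearIndependent_iff_injective_fintypeLinearCombination.mp hy), Finset.card_univ,
      Fintype.card_fun, ZMod.card, Fintype.card_fin]
  have hroots : Z.val ⊆ (linearizedPoly p a).roots := fun z hz => by
    obtain ⟨c, -, rfl⟩ := Finset.mem_image.mp hz
    rw [mem_roots hf, IsRoot, Fintype.linearCombination_apply, eval_linearizedPoly_sum_smul]
    simp [h]
  have := (card_le_degree_of_subset_roots hroots).trans_lt
    ((natDegree_lt_iff_degree_lt hf).mpr (degree_linearizedPoly_lt a))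
  omega

variable (p) in
def mooreMatrix {k : ℕ} (y : Fin k → K) : Matrix (Fin k) (Fin k) K :=
  .of fun r j => y j ^ p ^ (r : ℕ)

theorem isUnit_mooreMatrix {k : ℕ} {y : Fin k → K} (hy : LinearIndependent (ZMod p) y) :
    IsUnit (mooreMatrix p y) := by
  -- A vector in the left kernel is the coefficient vector of a linearized polynomial vanishing
  -- at every `y j`.
  rw [← Matrix.vecMul_injective_iff_isUnit]
  change Function.Injective (Matrix.vecMulLinear _)
  rw [injective_iff_map_eq_zero]
  intro a ha
  refine eq_zero_of_eval_linearizedPoly_eq_zero hy fun j => ?_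
  simpa [linearizedPoly, eval_finsetSum, Matrix.vecMul, dotProduct, mooreMatrix]
    using congrFun ha j

theorem eq_zero_of_sum_mul_pow_pow_eq_zero {k : ℕ} {y : Fin k → K}
    (hy : LinearIndependent (ZMod p) y) {u : Fin k → K}
    (h : ∀ r : Fin k, ∑ j, u j * y j ^ p ^ (r : ℕ) = 0) : u = 0 := by
  classical
  refine Matrix.mulVec_injective_iff_isUnit.mpr (isUnit_mooreMatrix hy) ?_
  ext r
  simpa [Matrix.mulVec, dotProduct, mooreMatrix, mul_comm] using h r

theorem exists_linearIndependent_sum_mul_pow_pow_eq {s : ℕ} (z g : Fin s → K) :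
    ∃ k ≤ s, ∃ y : Fin k → K, LinearIndependent (ZMod p) y ∧ ∃ u : Fin k → K,
      ∀ r : ℕ, ∑ i, g i * z i ^ p ^ r = ∑ j, u j * y j ^ p ^ r := by
  set W := Submodule.span (ZMod p) (Set.range z)
  have : Module.Finite (ZMod p) W := Module.Finite.span_of_finite _ (Set.finite_range z)
  let b := Module.finBasis (ZMod p) W
  let c : Fin s → Fin (Module.finrank (ZMod p) W) → ZMod p :=
    fun i => b.repr ⟨z i, Submodule.subset_span ⟨i, rfl⟩⟩
  have hz : ∀ i, z i = ∑ j, c i j • (b j : K) := fun i => by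
    have := congrArg Subtype.val (b.sum_repr ⟨z i, Submodule.subset_span ⟨i, rfl⟩⟩)
    rw [Submodule.coe_sum] at this
    exact this.symm
  refine ⟨_, (finrank_range_le_card z).trans (Fintype.card_fin s).le, fun j => (b j : K),
    b.linearIndependent.map' W.subtype W.ker_subtype, fun j => ∑ i, c i j • g i, fun r => ?_⟩
  calc ∑ i, g i * z i ^ p ^ r = ∑ i, ∑ j, c i j • g i * (b j : K) ^ p ^ r := by
        refine Finset.sum_congr rfl fun i _ => ?_
        rw [hz i, ← frobeniusAlgHom_zmod_pow_apply, map_sum, Finset.mul_sum]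
        simp only [map_smul, frobeniusAlgHom_zmod_pow_apply, mul_smul_comm, smul_mul_assoc]
    _ = _ := by
        rw [Finset.sum_comm]
        simp only [Finset.sum_mul]
        rfl

theorem sum_mul_pow_pow_eq_zero_of_forall_lt {s : ℕ} {z g : Fin s → K}
    (h : ∀ r < s, ∑ i, g i * z i ^ p ^ r = 0) (r : ℕ) : ∑ i, g i * z i ^ p ^ r = 0 := by
  obtain ⟨k, hk, y, hy, u, hu⟩ := exists_linearIndependent_sum_mul_pow_pow_eq (p := p) z g
  have hu0 : u = 0 := eq_zero_of_sum_mul_pow_pow_eq_zero hy fun r => by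
    rw [← hu]
    exact h r (by omega)
  simp [hu, hu0]

theorem sum_mul_sub_pow_pow {ι : Type*} {s : Finset ι} {t : ι → K} (ht : ∑ i ∈ s, t i = 0)
    (x : ι → K) (c : K) (r : ℕ) :
    ∑ i ∈ s, t i * (x i - c) ^ p ^ r = ∑ i ∈ s, t i * x i ^ p ^ r := by
  simp only [← frobeniusAlgHom_zmod_pow_apply, map_sub, mul_sub, Finset.sum_sub_distrib,
    ← Finset.sum_mul, ht, zero_mul, sub_zero]

end Linearized

section WengerVec

variable {K : Type*} [Field K] {p m : ℕ}

variable (p m) in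
def wengerVec (x : K) : Fin (m + 1) → K :=
  fun j => if (j : ℕ) = 0 then 1 else x ^ p ^ ((j : ℕ) - 1)

@[simp]
theorem wengerVec_apply_zero (x : K) : wengerVec p m x 0 = 1 := by
  simp [wengerVec]

@[simp]
theorem wengerVec_apply_succ (x : K) (k : Fin m) : wengerVec p m x k.succ = x ^ p ^ (k : ℕ) := by
  simp [wengerVec]

theorem sum_smul_wengerVec_apply_zero {s : ℕ} (x t : Fin s → K) :
    (∑ i, t i • wengerVec p m (x i)) 0 = ∑ i, t i := by
  simp [Finset.sum_apply]

theorem sum_smul_wengerVec_apply_succ {s : ℕ} (x t : Fin s → K) (k : Fin m) :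
    (∑ i, t i • wengerVec p m (x i)) k.succ = ∑ i, t i * x i ^ p ^ (k : ℕ) := by
  simp [Finset.sum_apply]

variable (p m) in
def IsSumOfWengerVecs (s : ℕ) (w : Fin (m + 1) → K) : Prop :=
  ∃ x t : Fin s → K, ∑ i, t i • wengerVec p m (x i) = w

theorem isSumOfWengerVecs_zero_iff {w : Fin (m + 1) → K} : IsSumOfWengerVecs p m 0 w ↔ w = 0 := by
  simp [IsSumOfWengerVecs, eq_comm]

theorem isSumOfWengerVecs_succ_iff {s : ℕ} {w : Fin (m + 1) → K} :
    IsSumOfWengerVecs p m (s + 1) w ↔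
      ∃ (x t : K), IsSumOfWengerVecs p m s (w - t • wengerVec p m x) := by
  constructor
  · rintro ⟨x, t, rfl⟩
    exact ⟨x (Fin.last s), t (Fin.last s), x ∘ Fin.castSucc, t ∘ Fin.castSucc,
      by simp [Fin.sum_univ_castSucc]⟩
  · rintro ⟨y, c, x, t, h⟩
    exact ⟨Fin.snoc x y, Fin.snoc t c, by simp [Fin.sum_univ_castSucc, h]⟩

variable [Fact p.Prime] [Algebra (ZMod p) K]

theorem sum_smul_wengerVec_ne_single {s : ℕ} (hs : s ≤ m) (x t : Fin s → K) :
    ∑ i, t i • wengerVec p m (x i) ≠ Pi.single (Fin.last m) 1 := by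
  intro h
  cases s with
  | zero => simpa using congrFun h (Fin.last m)
  | succ s =>
    obtain ⟨n, rfl⟩ : ∃ n, m = n + 1 := ⟨m - 1, by omega⟩
    have ht : ∑ i, t i = 0 := by
      simpa [sum_smul_wengerVec_apply_zero] using congrFun h 0
    have hmoment : ∀ k : Fin (n + 1), ∑ i : Fin s, t i.castSucc *
        (x i.castSucc - x (Fin.last s)) ^ p ^ (k : ℕ) = if k = Fin.last n then 1 else 0 := by
      intro k
      have hk := congrFun h k.succ
      rw [sum_smul_wengerVec_apply_succ, ← sum_mul_sub_pow_pow ht x (x (Fin.last s)),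
        Fin.sum_univ_castSucc] at hk
      simpa [Pi.single_apply, Fin.succ_last, (Fact.out : p.Prime).ne_zero] using hk
    have hvanish := sum_mul_pow_pow_eq_zero_of_forall_lt (p := p)
      (z := fun i => x i.castSucc - x (Fin.last s)) (g := fun i => t i.castSucc) (fun r hr =>
      (hmoment ⟨r, by omega⟩).trans (if_neg (by simp [Fin.ext_iff]; omega))) n
    simpa using (hmoment (Fin.last n)).symm.trans hvanish

theorem linearIndependent_wengerVec_cons {z : Fin m → K} (hz : LinearIndependent (ZMod p) z)
    (x : K) : LinearIndependent K fun i =>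
      wengerVec p m ((Fin.cons x fun i => x + z i : Fin (m + 1) → K) i) := by
  rw [Fintype.linearIndependent_iff]
  intro g hg
  have hsum : ∑ i, g i = 0 := by
    simpa [sum_smul_wengerVec_apply_zero] using congrFun hg 0
  have htail : (fun i : Fin m => g i.succ) = 0 := by
    refine eq_zero_of_sum_mul_pow_pow_eq_zero hz fun k => ?_
    have hk := congrFun hg k.succ
    rw [sum_smul_wengerVec_apply_succ, ← sum_mul_sub_pow_pow hsum _ x, Fin.sum_univ_succ] at hk
    simpa [(Fact.out : p.Prime).ne_zero] using hk
  have h0 : g 0 = 0 := by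
    simpa [Fin.sum_univ_succ, congrFun htail] using hsum
  intro i
  cases i using Fin.cases with
  | zero => exact h0
  | succ i => exact congrFun htail i

theorem exists_sum_smul_wengerVec_eq (hm : m ≤ Module.finrank (ZMod p) K) (x : K)
    (w : Fin (m + 1) → K) :
    ∃ y t : Fin (m + 1) → K, y 0 = x ∧ ∑ i, t i • wengerVec p m (y i) = w := by
  obtain ⟨z, hz⟩ := exists_linearIndependent_of_le_finrank hm
  have hspan := (linearIndependent_wengerVec_cons hz x).span_eq_top_of_card_eq_finrank'
    (by simp)
  obtain ⟨t, ht⟩ := (Submodule.mem_span_range_iff_exists_fun K).mp (hspan ▸ Submodule.mem_top)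
  exact ⟨_, t, rfl, ht⟩

theorem isSumOfWengerVecs_succ_of_le_finrank (hm : m ≤ Module.finrank (ZMod p) K)
    (w : Fin (m + 1) → K) : IsSumOfWengerVecs p m (m + 1) w :=
  let ⟨y, t, _, h⟩ := exists_sum_smul_wengerVec_eq hm 0 w
  ⟨y, t, h⟩

theorem exists_isSumOfWengerVecs_sub_smul (hm : m ≤ Module.finrank (ZMod p) K) (x : K)
    (w : Fin (m + 1) → K) : ∃ c : K, IsSumOfWengerVecs p m m (w - c • wengerVec p m x) := by
  obtain ⟨y, t, rfl, rfl⟩ := exists_sum_smul_wengerVec_eq hm x w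
  exact ⟨t 0, fun i => y i.succ, fun i => t i.succ, by simp [Fin.sum_univ_succ]⟩

end WengerVec

section Graph

open SimpleGraph

variable {p : ℕ} {F : Type} [Field F] {m : ℕ}

@[simp]
theorem lwGraph_adj_inl_inr {P L : Fin (m + 1) → F} :
    (lwGraph p F m).Adj (.inl P) (.inr L) ↔ lwAdj p P L := by
  simp [lwGraph]

@[simp]
theorem lwGraph_adj_inr_inl {P L : Fin (m + 1) → F} :
    (lwGraph p F m).Adj (.inr L) (.inl P) ↔ lwAdj p P L := by
  simp [lwGraph]

@[simp]
theorem lwGraph_not_adj_inl_inl {P P' : Fin (m + 1) → F} :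
    ¬ (lwGraph p F m).Adj (.inl P) (.inl P') := by
  simp [lwGraph]

@[simp]
theorem lwGraph_not_adj_inr_inr {L L' : Fin (m + 1) → F} :
    ¬ (lwGraph p F m).Adj (.inr L) (.inr L') := by
  simp [lwGraph]

theorem lwAdj.sub_eq_smul_wengerVec {P L L' : Fin (m + 1) → F} (h : lwAdj p P L)
    (h' : lwAdj p P L') : L' - L = (L' 0 - L 0) • wengerVec p m (P 0) := by
  funext j
  cases j using Fin.cases with
  | zero => simp
  | succ k =>
    simp only [Pi.sub_apply, Pi.smul_apply, wengerVec_apply_succ, smul_eq_mul]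
    linear_combination h' k - h k

theorem lwAdj.add_smul_wengerVec {P L : Fin (m + 1) → F} (h : lwAdj p P L) (c : F) :
    lwAdj p P (L + c • wengerVec p m (P 0)) := by
  intro k
  simp only [Pi.add_apply, Pi.smul_apply, wengerVec_apply_succ, wengerVec_apply_zero,
    smul_eq_mul]
  linear_combination h k

theorem exists_lwAdj_line (P : Fin (m + 1) → F) : ∃ L, lwAdj p P L :=
  ⟨Fin.cons 0 fun k => -P k.succ, fun k => by simp⟩

theorem exists_lwAdj_point (L : Fin (m + 1) → F) (x : F) : ∃ P, P 0 = x ∧ lwAdj p P L :=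
  ⟨Fin.cons x fun k => x ^ p ^ (k : ℕ) * L 0 - L k.succ, rfl, fun k => by simp⟩

theorem exists_walk_of_isSumOfWengerVecs {s : ℕ} {L L' : Fin (m + 1) → F}
    (h : IsSumOfWengerVecs p m s (L' - L)) :
    ∃ w : (lwGraph p F m).Walk (.inr L) (.inr L'), w.length = 2 * s := by
  induction s generalizing L' with
  | zero =>
    obtain rfl : L' = L := sub_eq_zero.mp (isSumOfWengerVecs_zero_iff.mp h)
    exact ⟨.nil, rfl⟩
  | succ s ih =>
    obtain ⟨x, t, hs⟩ := isSumOfWengerVecs_succ_iff.mp h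
    obtain ⟨w, hw⟩ := ih (L' := L' - t • wengerVec p m x) (by rwa [sub_right_comm])
    obtain ⟨P, rfl, hP⟩ := exists_lwAdj_point (p := p) (L' - t • wengerVec p m x) x
    have hP' : lwAdj p P L' := by simpa using hP.add_smul_wengerVec t
    refine ⟨(w.concat (lwGraph_adj_inr_inl.mpr hP)).concat (lwGraph_adj_inl_inr.mpr hP'), ?_⟩
    simp [hw]
    ring

theorem exists_isSumOfWengerVecs_of_walk {L L' : Fin (m + 1) → F} :
    ∀ w : (lwGraph p F m).Walk (.inr L) (.inr L'),
      ∃ s, w.length = 2 * s ∧ IsSumOfWengerVecs p m s (L' - L)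
  | .nil => ⟨0, rfl, isSumOfWengerVecs_zero_iff.mpr (sub_self L)⟩
  | .cons (v := .inr _) h _ => absurd h lwGraph_not_adj_inr_inr
  | .cons (v := .inl _) _ (.cons (v := .inl _) h _) => absurd h lwGraph_not_adj_inl_inl
  | .cons (v := .inl P) h (.cons (v := .inr L₁) h' w) => by
    obtain ⟨s, hs, hsum⟩ := exists_isSumOfWengerVecs_of_walk w
    have hstep := (lwGraph_adj_inr_inl.mp h).sub_eq_smul_wengerVec (lwGraph_adj_inl_inr.mp h')
    refine ⟨s + 1, by simp [hs]; ring, isSumOfWengerVecs_succ_iff.mpr ⟨P 0, L₁ 0 - L 0, ?_⟩⟩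
    rwa [← hstep, sub_sub_sub_cancel_right]

variable [Fact p.Prime] [Algebra (ZMod p) F]

theorem two_mul_succ_le_length_of_sub_eq_single {L L' : Fin (m + 1) → F}
    (h : L' - L = Pi.single (Fin.last m) 1) (w : (lwGraph p F m).Walk (.inr L) (.inr L')) :
    2 * (m + 1) ≤ w.length := by
  obtain ⟨s, hs, x, t, hxt⟩ := exists_isSumOfWengerVecs_of_walk w
  by_contra! hlt
  exact sum_smul_wengerVec_ne_single (by omega) x t (hxt.trans h)

theorem exists_walk_inl_inr (hm : m ≤ Module.finrank (ZMod p) F) (P L : Fin (m + 1) → F) :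
    ∃ w : (lwGraph p F m).Walk (.inl P) (.inr L), w.length = 2 * m + 1 := by
  obtain ⟨L₀, h₀⟩ := exists_lwAdj_line (p := p) P
  obtain ⟨c, hc⟩ := exists_isSumOfWengerVecs_sub_smul hm (P 0) (L - L₀)
  obtain ⟨w, hw⟩ := exists_walk_of_isSumOfWengerVecs
    (L := L₀ + c • wengerVec p m (P 0)) (L' := L) (by rwa [sub_add_eq_sub_sub])
  exact ⟨.cons (lwGraph_adj_inl_inr.mpr (h₀.add_smul_wengerVec c)) w, by simp [hw]⟩

theorem lwGraph_edist_le (hm : m ≤ Module.finrank (ZMod p) F)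
    (u v : (Fin (m + 1) → F) ⊕ (Fin (m + 1) → F)) :
    (lwGraph p F m).edist u v ≤ ↑(2 * (m + 1)) := by
  suffices ∃ w : (lwGraph p F m).Walk u v, w.length ≤ 2 * (m + 1) by
    obtain ⟨w, hw⟩ := this
    exact (edist_le w).trans (by exact_mod_cast hw)
  rcases u with P | L <;> rcases v with P' | L'
  · obtain ⟨L', hL'⟩ := exists_lwAdj_line (p := p) P'
    obtain ⟨w, hw⟩ := exists_walk_inl_inr hm P L'
    exact ⟨w.concat (lwGraph_adj_inr_inl.mpr hL'), by simp [hw]; omega⟩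
  · obtain ⟨w, hw⟩ := exists_walk_inl_inr hm P L'
    exact ⟨w, by omega⟩
  · obtain ⟨w, hw⟩ := exists_walk_inl_inr hm P' L
    exact ⟨w.reverse, by simp [hw]⟩
  · obtain ⟨w, hw⟩ :=
      exists_walk_of_isSumOfWengerVecs (isSumOfWengerVecs_succ_of_le_finrank hm (L' - L))
    exact ⟨w, hw.le⟩

theorem lwGraph_ediam_le (hm : m ≤ Module.finrank (ZMod p) F) :
    (lwGraph p F m).ediam ≤ ↑(2 * (m + 1)) :=
  ediam_le_of_edist_le (lwGraph_edist_le hm)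

end Graph

theorem stmt18_general (p e m : ℕ) [Fact p.Prime] (hme : m ≤ e) :
    (∀ (s : ℕ), s ≤ m → ∀ x t : Fin s → GaloisField p e,
      (fun j : Fin (m + 1) => ∑ i : Fin s,
          t i * (if (j : ℕ) = 0 then 1 else x i ^ p ^ ((j : ℕ) - 1))) ≠
        (fun j : Fin (m + 1) => if (j : ℕ) = m then 1 else 0)) ∧
    (∀ L L' : Fin (m + 1) → GaloisField p e,
      (L' - L = fun j : Fin (m + 1) => if (j : ℕ) = m then 1 else 0) →
      2 * (m + 1) ≤ (lwGraph p (GaloisField p e) m).dist (Sum.inr L) (Sum.inr L')) ∧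
    (lwGraph p (GaloisField p e) m).diam = 2 * (m + 1) := by
  have hrank : m ≤ Module.finrank (ZMod p) (GaloisField p e) := by
    rcases eq_or_ne e 0 with rfl | he
    · simp [Nat.le_zero.mp hme]
    · rwa [GaloisField.finrank p he]
  have hsingle : (fun j : Fin (m + 1) => if (j : ℕ) = m then (1 : GaloisField p e) else 0) =
      Pi.single (Fin.last m) 1 := by
    ext j
    simp [Pi.single_apply, Fin.ext_iff]
  have hediam : (lwGraph p (GaloisField p e) m).ediam ≠ ⊤ :=
    ne_top_of_le_ne_top (ENat.natCast_ne_top _) (lwGraph_ediam_le hrank)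
  have hdist : ∀ L L', L' - L = Pi.single (Fin.last m) 1 →
      2 * (m + 1) ≤ (lwGraph p (GaloisField p e) m).dist (.inr L) (.inr L') := fun L L' h => by
    obtain ⟨w, hw⟩ := (SimpleGraph.edist_ne_top_iff_reachable.mp
      (ne_top_of_le_ne_top hediam SimpleGraph.edist_le_ediam)).exists_walk_length_eq_dist
    exact hw ▸ two_mul_succ_le_length_of_sub_eq_single h w
  refine ⟨fun s hs x t => ?_, fun L L' h => hdist L L' (h.trans hsingle), le_antisymm ?_ ?_⟩
  · rw [hsingle]
    convert sum_smul_wengerVec_ne_single (p := p) hs x t using 1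
    ext j
    simp [Finset.sum_apply, wengerVec]
  · exact ENat.toNat_le_of_le_natCast (lwGraph_ediam_le hrank)
  · exact (hdist 0 _ (sub_zero _)).trans (SimpleGraph.dist_le_diam hediam)

/-- If `m ≤ e`: the system `t_1 v(x_1) + ⋯ + t_s v(x_s) = (0,…,0,1)` with
`v(x) = (1, x, x^p, …, x^{p^{m-1}})` has no solution for `s ≤ m`; consequently two lines
differing by `[0,…,0,1]` are at distance at least `2(m+1)`, and the diameter of
`L_m(q)` is exactly `2(m+1)`. -/
theorem stmt18 (p e m : ℕ) [Fact p.Prime] (hm : 1 ≤ m) (hme : m ≤ e) :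
    (∀ (s : ℕ), s ≤ m → ∀ x t : Fin s → GaloisField p e,
      (fun j : Fin (m + 1) => ∑ i : Fin s,
          t i * (if (j : ℕ) = 0 then 1 else x i ^ p ^ ((j : ℕ) - 1))) ≠
        (fun j : Fin (m + 1) => if (j : ℕ) = m then 1 else 0)) ∧
    (∀ L L' : Fin (m + 1) → GaloisField p e,
      (L' - L = fun j : Fin (m + 1) => if (j : ℕ) = m then 1 else 0) →
      2 * (m + 1) ≤ (lwGraph p (GaloisField p e) m).dist (Sum.inr L) (Sum.inr L')) ∧
    (lwGraph p (GaloisField p e) m).diam = 2 * (m + 1) :=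
  stmt18_general p e m hme
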